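/- Let U₁ = k⟨x₁,x₂⟩/(f₁, f₂ + z) where f₁ = x₁²x₂ − x₂x₁² − x₂x₁x₂ + x₂²x₁, f₂ = x₁x₂² − x₂²x₁, and z = x₁x₂ − x₂x₁. Then the assignment x₁ ↦ −x₁ − x₂ − 1, x₂ ↦ −x₂ − 1 extends to a well-defined algebra automorphism of U₁. -/

import Mathlib

/-!
The substitution `σ : x₁ ↦ −x₁ − x₂ − 1, x₂ ↦ −x₂ − 1` sends the relators to
`f₁ ↦ −f₁ − (f₂ + z)` and `f₂ + z ↦ −(f₂ + z)`, so it preserves the ideal `(f₁, f₂ + z)` and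
descends to an endomorphism of `U₁`. The substitution `x₁ ↦ −x₁ + x₂, x₂ ↦ −x₂ − 1` acts on the
relators by `f₁ ↦ −f₁ + (f₂ + z)`, `f₂ + z ↦ −(f₂ + z)`, and is inverse to `σ` on the generators.
-/

/-- The defining relations of `U₁ = k⟨x₁,x₂⟩/(f₁, f₂ + z)` where
`f₁ = x₁²x₂ − x₂x₁² − x₂x₁x₂ + x₂²x₁`, `f₂ = x₁x₂² − x₂²x₁` and `z = x₁x₂ − x₂x₁`. -/
def u1Rel (k : Type*) [Field k] :
    FreeAlgebra k (Fin 2) → FreeAlgebra k (Fin 2) → Prop := fun u v =>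
  (u = FreeAlgebra.ι k 0 * FreeAlgebra.ι k 0 * FreeAlgebra.ι k 1 -
        FreeAlgebra.ι k 1 * FreeAlgebra.ι k 0 * FreeAlgebra.ι k 0 -
        FreeAlgebra.ι k 1 * FreeAlgebra.ι k 0 * FreeAlgebra.ι k 1 +
        FreeAlgebra.ι k 1 * FreeAlgebra.ι k 1 * FreeAlgebra.ι k 0 ∧ v = 0) ∨
  (u = FreeAlgebra.ι k 0 * FreeAlgebra.ι k 1 * FreeAlgebra.ι k 1 -
        FreeAlgebra.ι k 1 * FreeAlgebra.ι k 1 * FreeAlgebra.ι k 0 +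
        (FreeAlgebra.ι k 0 * FreeAlgebra.ι k 1 - FreeAlgebra.ι k 1 * FreeAlgebra.ι k 0) ∧
    v = 0)

namespace U1

section Relators

variable {R : Type*} [Ring R]

def f1 (a b : R) : R := a * a * b - b * a * a - b * a * b + b * b * a

def f2AddZ (a b : R) : R := a * b * b - b * b * a + (a * b - b * a)

theorem map_f1 {S F : Type*} [Ring S] [FunLike F R S] [RingHomClass F R S] (φ : F) (a b : R) :
    φ (f1 a b) = f1 (φ a) (φ b) := by
  simp only [f1, map_add, map_sub, map_mul]

theorem map_f2AddZ {S F : Type*} [Ring S] [FunLike F R S] [RingHomClass F R S] (φ : F)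
    (a b : R) : φ (f2AddZ a b) = f2AddZ (φ a) (φ b) := by
  simp only [f2AddZ, map_add, map_sub, map_mul]

variable (a b : R)

theorem f1_neg_sub_sub_one : f1 (-a - b - 1) (-b - 1) = -f1 a b - f2AddZ a b := by
  simp only [f1, f2AddZ]; noncomm_ring

theorem f2AddZ_neg_sub_sub_one : f2AddZ (-a - b - 1) (-b - 1) = -f2AddZ a b := by
  simp only [f2AddZ]; noncomm_ring

theorem f1_neg_add : f1 (-a + b) (-b - 1) = -f1 a b + f2AddZ a b := by
  simp only [f1, f2AddZ]; noncomm_ring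

theorem f2AddZ_neg_add : f2AddZ (-a + b) (-b - 1) = -f2AddZ a b := by
  simp only [f2AddZ]; noncomm_ring

end Relators

variable {k : Type*} [Field k]

/-- `gen 0` is `x₁` and `gen 1` is `x₂`. -/
noncomputable abbrev gen (i : Fin 2) : RingQuot (u1Rel k) :=
  RingQuot.mkAlgHom k (u1Rel k) (FreeAlgebra.ι k i)

theorem f1_gen : f1 (gen 0) (gen 1) = (0 : RingQuot (u1Rel k)) := by
  rw [← map_f1, ← map_zero (RingQuot.mkAlgHom k (u1Rel k))]
  exact RingQuot.mkAlgHom_rel k (Or.inl ⟨rfl, rfl⟩)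

theorem f2AddZ_gen : f2AddZ (gen 0) (gen 1) = (0 : RingQuot (u1Rel k)) := by
  rw [← map_f2AddZ, ← map_zero (RingQuot.mkAlgHom k (u1Rel k))]
  exact RingQuot.mkAlgHom_rel k (Or.inr ⟨rfl, rfl⟩)

section Lift

variable {A : Type*} [Ring A] [Algebra k A]

noncomputable def lift (a b : A) (h1 : f1 a b = 0) (h2 : f2AddZ a b = 0) :
    RingQuot (u1Rel k) →ₐ[k] A :=
  RingQuot.liftAlgHom k ⟨FreeAlgebra.lift k ![a, b], by
    rintro u v (⟨rfl, rfl⟩ | ⟨rfl, rfl⟩)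
    · change FreeAlgebra.lift k ![a, b] (f1 _ _) = _
      simpa [map_f1] using h1
    · change FreeAlgebra.lift k ![a, b] (f2AddZ _ _) = _
      simpa [map_f2AddZ] using h2⟩

@[simp]
theorem lift_gen (a b : A) (h1 : f1 a b = 0) (h2 : f2AddZ a b = 0) (i : Fin 2) :
    lift a b h1 h2 (gen i : RingQuot (u1Rel k)) = ![a, b] i := by
  simp [lift]

theorem algHom_ext {φ ψ : RingQuot (u1Rel k) →ₐ[k] A} (h0 : φ (gen 0) = ψ (gen 0))
    (h1 : φ (gen 1) = ψ (gen 1)) : φ = ψ := by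
  refine RingQuot.ringQuot_ext' k _ _ (FreeAlgebra.hom_ext (funext fun i => ?_))
  fin_cases i
  exacts [h0, h1]

end Lift

noncomputable def affineAut : RingQuot (u1Rel k) ≃ₐ[k] RingQuot (u1Rel k) :=
  AlgEquiv.ofAlgHom
    (lift (-gen 0 - gen 1 - 1) (-gen 1 - 1)
      (by simp [f1_neg_sub_sub_one, f1_gen, f2AddZ_gen])
      (by simp [f2AddZ_neg_sub_sub_one, f2AddZ_gen]))
    (lift (-gen 0 + gen 1) (-gen 1 - 1)
      (by simp [f1_neg_add, f1_gen, f2AddZ_gen])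
      (by simp [f2AddZ_neg_add, f2AddZ_gen]))
    (algHom_ext
      (by simp only [AlgHom.comp_apply, lift_gen, map_add, map_neg, Matrix.cons_val_zero,
        Matrix.cons_val_one, Matrix.cons_val_fin_one, AlgHom.id_apply]; abel)
      (by simp))
    (algHom_ext (by simp) (by simp))

theorem affineAut_gen_zero : affineAut (gen 0) = (-gen 0 - gen 1 - 1 : RingQuot (u1Rel k)) :=
  lift_gen _ _ _ _ 0

theorem affineAut_gen_one : affineAut (gen 1) = (-gen 1 - 1 : RingQuot (u1Rel k)) :=
  lift_gen _ _ _ _ 1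

end U1

theorem stmt19_general (k : Type*) [Field k] :
    ∃ φ : RingQuot (u1Rel k) ≃ₐ[k] RingQuot (u1Rel k),
      φ (RingQuot.mkAlgHom k _ (FreeAlgebra.ι k 0)) =
        -RingQuot.mkAlgHom k _ (FreeAlgebra.ι k 0) -
        RingQuot.mkAlgHom k _ (FreeAlgebra.ι k 1) -
        algebraMap k (RingQuot (u1Rel k)) 1 ∧
      φ (RingQuot.mkAlgHom k _ (FreeAlgebra.ι k 1)) =
        -RingQuot.mkAlgHom k _ (FreeAlgebra.ι k 1) - algebraMap k (RingQuot (u1Rel k)) 1 := by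
  rw [map_one]
  exact ⟨U1.affineAut, U1.affineAut_gen_zero, U1.affineAut_gen_one⟩

/-- in `U₁ = k⟨x₁,x₂⟩/(f₁, f₂ + z)`, the assignment
`x₁ ↦ −x₁ − x₂ − 1`, `x₂ ↦ −x₂ − 1` extends to an algebra automorphism. -/
theorem stmt19 (k : Type*) [Field k] [IsAlgClosed k] [CharZero k] :
    ∃ φ : RingQuot (u1Rel k) ≃ₐ[k] RingQuot (u1Rel k),
      φ (RingQuot.mkAlgHom k _ (FreeAlgebra.ι k 0)) =
        -RingQuot.mkAlgHom k _ (FreeAlgebra.ι k 0) -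
        RingQuot.mkAlgHom k _ (FreeAlgebra.ι k 1) -
        algebraMap k (RingQuot (u1Rel k)) 1 ∧
      φ (RingQuot.mkAlgHom k _ (FreeAlgebra.ι k 1)) =
        -RingQuot.mkAlgHom k _ (FreeAlgebra.ι k 1) - algebraMap k (RingQuot (u1Rel k)) 1 :=
  stmt19_general k
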